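/- Every finite nonempty subset V of ℤ² all of whose connected components (under nearest-neighbor adjacency) have size at least 2 can be partitioned into tiles, each tile being isometric (under lattice symmetries) to one of: a domino (2 collinear adjacent sites), a straight tromino (3 collinear adjacent sites), an L-tromino (3 sites forming a corner), a T-tetromino (a site with 3 of its neighbors), or a plus-pentomino (a site with all 4 of its neighbors). -/

import Mathlib

/-
Up to lattice symmetry the five tiles are exactly the stars of the grid graph: a site
together with one to four of its neighbours. Stars are peeled off greedily so that what remains
never has an isolated site. If some site has a single neighbour `u` in `V`, remove `u` together
with all such pendant sites at `u`. Otherwise every site has two neighbours in `V`, and removing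
any domino `{p, q}` isolates nothing: the grid is bipartite, hence triangle-free, so no site is
adjacent to both `p` and `q`.
-/

/-- The eight lattice symmetries of `ℤ²` fixing the origin. -/
def latticeSym (σ : Fin 8) (p : ℤ × ℤ) : ℤ × ℤ :=
  match σ with
  | 0 => (p.1, p.2)
  | 1 => (-p.1, p.2)
  | 2 => (p.1, -p.2)
  | 3 => (-p.1, -p.2)
  | 4 => (p.2, p.1)
  | 5 => (-p.2, p.1)
  | 6 => (p.2, -p.1)
  | 7 => (-p.2, -p.1)

/-- The five base shapes: domino, straight tromino, L-tromino, T-tetromino,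
plus-pentomino. -/
def baseShape : Fin 5 → Finset (ℤ × ℤ)
  | 0 => {(0, 0), (1, 0)}
  | 1 => {(0, 0), (1, 0), (2, 0)}
  | 2 => {(0, 0), (1, 0), (0, 1)}
  | 3 => {(0, 0), (1, 0), (-1, 0), (0, 1)}
  | 4 => {(0, 0), (1, 0), (-1, 0), (0, 1), (0, -1)}

/-- A tile is the image of one of the five base shapes under a lattice symmetry
followed by a translation. -/
def IsTile (T : Finset (ℤ × ℤ)) : Prop :=
  ∃ (i : Fin 5) (σ : Fin 8) (t : ℤ × ℤ),
    T = (baseShape i).image (fun p => t + latticeSym σ p)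

namespace SimpleGraph

variable {α : Type*} (G : SimpleGraph α)

def NoIsolatedOn (V : Finset α) : Prop := ∀ x ∈ V, ∃ y ∈ V, G.Adj x y

open Classical in
noncomputable def pendantsAt (V : Finset α) (u : α) : Finset α :=
  V.filter fun w => G.Adj w u ∧ ∀ z ∈ V, G.Adj w z → z = u

variable {G}

theorem mem_pendantsAt {V : Finset α} {u w : α} :
    w ∈ G.pendantsAt V u ↔ w ∈ V ∧ G.Adj w u ∧ ∀ z ∈ V, G.Adj w z → z = u := by
  simp only [pendantsAt, Finset.mem_filter]

variable [DecidableEq α]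

variable (G) in
def IsStar (T : Finset α) : Prop :=
  ∃ u S, S.Nonempty ∧ (∀ s ∈ S, G.Adj u s) ∧ T = insert u S

variable {V : Finset α}

theorem NoIsolatedOn.sdiff_insert_pendantsAt (hV : G.NoIsolatedOn V) (u : α) :
    G.NoIsolatedOn (V \ insert u (G.pendantsAt V u)) := by
  intro x hx
  obtain ⟨hxV, hxT⟩ := Finset.mem_sdiff.mp hx
  obtain ⟨hxu, hxP⟩ : x ≠ u ∧ x ∉ G.pendantsAt V u := by simpa [not_or] using hxT
  have not_adj_pendant : ∀ z ∈ G.pendantsAt V u, ¬ G.Adj x z := fun z hz hxz =>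
    hxu ((mem_pendantsAt.mp hz).2.2 x hxV hxz.symm)
  obtain ⟨y, hyV, hxy⟩ := hV x hxV
  by_cases hyu : y = u
  · subst hyu
    obtain ⟨z, hzV, hxz, hzy⟩ : ∃ z ∈ V, G.Adj x z ∧ z ≠ y := by
      by_contra! h
      exact hxP (mem_pendantsAt.mpr ⟨hxV, hxy, h⟩)
    refine ⟨z, Finset.mem_sdiff.mpr ⟨hzV, ?_⟩, hxz⟩
    rintro hz
    rcases Finset.mem_insert.mp hz with rfl | hzP
    exacts [hzy rfl, not_adj_pendant z hzP hxz]
  · refine ⟨y, Finset.mem_sdiff.mpr ⟨hyV, ?_⟩, hxy⟩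
    rintro hy
    rcases Finset.mem_insert.mp hy with rfl | hyP
    exacts [hyu rfl, not_adj_pendant y hyP hxy]

theorem NoIsolatedOn.sdiff_pair (hG : G.CliqueFree 3) (hV : G.NoIsolatedOn V)
    (hdeg : ∀ x ∈ V, ∀ y ∈ V, G.Adj x y → ∃ z ∈ V, G.Adj x z ∧ z ≠ y) {p q : α}
    (hpq : G.Adj p q) : G.NoIsolatedOn (V \ {p, q}) := by
  have not_adj_both : ∀ x, G.Adj x p → ¬ G.Adj x q := fun x hxp hxq =>
    hG {x, p, q} (is3Clique_triple_iff.mpr ⟨hxp, hxq, hpq⟩)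
  intro x hx
  obtain ⟨hxV, hxT⟩ := Finset.mem_sdiff.mp hx
  obtain ⟨y, hyV, hxy⟩ := hV x hxV
  by_cases hy : y ∈ ({p, q} : Finset α)
  · obtain ⟨z, hzV, hxz, hzy⟩ := hdeg x hxV y hyV hxy
    refine ⟨z, Finset.mem_sdiff.mpr ⟨hzV, ?_⟩, hxz⟩
    simp only [Finset.mem_insert, Finset.mem_singleton] at hy ⊢
    rintro (rfl | rfl) <;> rcases hy with rfl | rfl
    exacts [hzy rfl, not_adj_both x hxz hxy, not_adj_both x hxy hxz, hzy rfl]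
  · exact ⟨y, Finset.mem_sdiff.mpr ⟨hyV, hy⟩, hxy⟩

theorem NoIsolatedOn.exists_isStar_sdiff (hG : G.CliqueFree 3) (hV : G.NoIsolatedOn V)
    (hne : V.Nonempty) : ∃ T ⊆ V, G.IsStar T ∧ G.NoIsolatedOn (V \ T) := by
  by_cases hpendant : ∃ c ∈ V, ∃ u ∈ V, G.Adj c u ∧ ∀ z ∈ V, G.Adj c z → z = u
  · obtain ⟨c, hcV, u, huV, hcu, hc⟩ := hpendant
    refine ⟨insert u (G.pendantsAt V u),
      Finset.insert_subset huV fun w hw => (mem_pendantsAt.mp hw).1,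
      ⟨u, _, ⟨c, mem_pendantsAt.mpr ⟨hcV, hcu, hc⟩⟩,
        fun s hs => (mem_pendantsAt.mp hs).2.1.symm, rfl⟩,
      hV.sdiff_insert_pendantsAt u⟩
  · push Not at hpendant
    obtain ⟨p, hpV⟩ := hne
    obtain ⟨q, hqV, hpq⟩ := hV p hpV
    exact ⟨{p, q}, Finset.insert_subset hpV (Finset.singleton_subset_iff.mpr hqV),
      ⟨p, {q}, Finset.singleton_nonempty q, by simpa using hpq, rfl⟩,
      hV.sdiff_pair hG hpendant hpq⟩

theorem NoIsolatedOn.exists_isStar_partition (hG : G.CliqueFree 3) (hV : G.NoIsolatedOn V) :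
    ∃ 𝒯 : Finset (Finset α), (∀ T ∈ 𝒯, G.IsStar T) ∧
      (𝒯 : Set (Finset α)).PairwiseDisjoint id ∧ 𝒯.biUnion id = V := by
  induction V using Finset.strongInduction with
  | H V ih =>
    rcases V.eq_empty_or_nonempty with rfl | hne
    · exact ⟨∅, by simp, by simp, by simp⟩
    obtain ⟨T, hTV, hT, hVT⟩ := hV.exists_isStar_sdiff hG hne
    have hTne : T.Nonempty := by
      obtain ⟨u, S, -, -, rfl⟩ := hT
      exact Finset.insert_nonempty u S
    obtain ⟨𝒯, hstar, hdisj, hcover⟩ := ih (V \ T) (Finset.sdiff_ssubset hTV hTne) hVT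
    have hsub : ∀ T' ∈ 𝒯, T' ⊆ V \ T := fun T' hT' =>
      hcover ▸ Finset.subset_biUnion_of_mem id hT'
    refine ⟨insert T 𝒯, ?_, ?_, ?_⟩
    · simpa only [Finset.forall_mem_insert] using ⟨hT, hstar⟩
    · rw [Finset.coe_insert]
      exact hdisj.insert fun T' hT' _ => Finset.disjoint_of_subset_right (hsub T' hT')
        Finset.disjoint_sdiff
    · rw [Finset.biUnion_insert, hcover, id, Finset.union_sdiff_of_subset hTV]

end SimpleGraph

def gridGraph : SimpleGraph (ℤ × ℤ) where
  Adj x y := |x.1 - y.1| + |x.2 - y.2| = 1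
  symm := ⟨fun x y h => by rwa [abs_sub_comm y.1, abs_sub_comm y.2]⟩
  loopless := ⟨fun x h => by simp at h⟩

def unitVecs : Finset (ℤ × ℤ) := {(1, 0), (-1, 0), (0, 1), (0, -1)}

theorem gridGraph_adj_iff {x y : ℤ × ℤ} : gridGraph.Adj x y ↔ y - x ∈ unitVecs := by
  obtain ⟨a, b⟩ := x
  obtain ⟨c, d⟩ := y
  simp only [gridGraph, unitVecs, Prod.mk_sub_mk, Finset.mem_insert, Finset.mem_singleton,
    Prod.mk.injEq]
  rcases abs_cases (a - c) <;> rcases abs_cases (b - d) <;> omega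

def gridGraph.parityColoring : gridGraph.Coloring (ZMod 2) :=
  SimpleGraph.Coloring.mk (fun x => ((x.1 + x.2 : ℤ) : ZMod 2)) fun {x y} hxy => by
    rw [ne_eq, ZMod.intCast_eq_intCast_iff_dvd_sub]
    have := gridGraph_adj_iff.mp hxy
    simp only [unitVecs, Finset.mem_insert, Finset.mem_singleton, Prod.ext_iff, Prod.fst_sub,
      Prod.snd_sub] at this
    omega

theorem gridGraph_cliqueFree_three : gridGraph.CliqueFree 3 :=
  gridGraph.parityColoring.colorable.cliqueFree (by simp)

theorem isTile_image_add {T : Finset (ℤ × ℤ)} (hT : IsTile T) (u : ℤ × ℤ) :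
    IsTile (T.image (u + ·)) := by
  obtain ⟨i, σ, t, rfl⟩ := hT
  exact ⟨i, σ, u + t, by simp only [Finset.image_image, Function.comp_def, add_assoc]⟩

theorem isTile_insert_zero {S : Finset (ℤ × ℤ)} (hS : S ⊆ unitVecs) (hne : S.Nonempty) :
    IsTile (insert 0 S) := by
  -- a straight tromino centred at the origin needs the translation by a unit vector
  have stars_at_origin : ∀ S ∈ unitVecs.powerset, S.Nonempty →
      ∃ (i : Fin 5) (σ : Fin 8), ∃ t ∈ insert 0 unitVecs,
        insert 0 S = (baseShape i).image (fun p => t + latticeSym σ p) := by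
    decide
  obtain ⟨i, σ, t, -, h⟩ := stars_at_origin S (Finset.mem_powerset.mpr hS) hne
  exact ⟨i, σ, t, h⟩

theorem SimpleGraph.IsStar.isTile {T : Finset (ℤ × ℤ)} (hT : gridGraph.IsStar T) :
    IsTile T := by
  obtain ⟨u, S, hne, hadj, rfl⟩ := hT
  have hS : S.image (· - u) ⊆ unitVecs := by
    simpa only [Finset.image_subset_iff] using fun s hs => gridGraph_adj_iff.mp (hadj s hs)
  convert isTile_image_add (isTile_insert_zero hS (hne.image _)) u
  simp [Finset.image_insert, Finset.image_image, Function.comp_def]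

theorem stmt_16_general (V : Finset (ℤ × ℤ))
    (hcomp : ∀ x ∈ V, ∃ y ∈ V, |x.1 - y.1| + |x.2 - y.2| = 1) :
    ∃ 𝒯 : Finset (Finset (ℤ × ℤ)),
      (∀ T ∈ 𝒯, IsTile T) ∧
      (∀ T ∈ 𝒯, ∀ T' ∈ 𝒯, T ≠ T' → Disjoint T T') ∧
      𝒯.biUnion id = V := by
  have hV : gridGraph.NoIsolatedOn V := hcomp
  obtain ⟨𝒯, hstar, hdisj, hcover⟩ := hV.exists_isStar_partition gridGraph_cliqueFree_three
  exact ⟨𝒯, fun T hT => (hstar T hT).isTile, hdisj, hcover⟩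

theorem stmt_16 (V : Finset (ℤ × ℤ)) (hV : V.Nonempty)
    (hcomp : ∀ x ∈ V, ∃ y ∈ V, |x.1 - y.1| + |x.2 - y.2| = 1) :
    ∃ 𝒯 : Finset (Finset (ℤ × ℤ)),
      (∀ T ∈ 𝒯, IsTile T) ∧
      (∀ T ∈ 𝒯, ∀ T' ∈ 𝒯, T ≠ T' → Disjoint T T') ∧
      𝒯.biUnion id = V :=
  stmt_16_general V hcomp
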